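/- Let 0 < A ≤ B and δ > 0. Then there exist constants c > 0, C > 0 and ε_0 > 0, depending only on A, B and δ, with the following property: for every ε with 0 < ε < ε_0 and every finite increasing sequence x_0 < x_1 < ⋯ < x_N of points in [0,1] satisfying ε + A(x_j − x_0)² ≤ x_{j+1} − x_j ≤ ε + B(x_j − x_0)² for all 0 ≤ j < N, and such that x_N − x_{N−1} ≥ δ, one has c/√ε ≤ N ≤ C/√ε. -/
import Mathlib


open Set Filter MeasureTheory Topology

/-- The length (Lebesgue measure) of a set of reals. -/
noncomputable def len (S : Set ℝ) : ℝ := (MeasureTheory.volume S).toReal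

/-- `S` is a bounded open interval. -/
def IsOpenInterval (S : Set ℝ) : Prop := ∃ a b : ℝ, a < b ∧ S = Set.Ioo a b

/-- The cross-ratio `B(T,J)` for `T` with endpoints `a < b` and `J ⊂ T` with endpoints
`c < d`: `B(T,J) = (|T||J|)/(|L||R|)`. -/
noncomputable def crB (a c d b : ℝ) : ℝ := (|b - a| * |d - c|) / (|c - a| * |b - d|)

/-- The cross-ratio `A(T,J) = (|T||J|)/(|L∪J||J∪R|)`. -/
noncomputable def crA (a c d b : ℝ) : ℝ := (|b - a| * |d - c|) / (|d - a| * |b - c|)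

/-- Cross-ratio distortion `B(g,T,J) = B(g(T),g(J))/B(T,J)` for `g` monotone on `T`. -/
noncomputable def crBg (g : ℝ → ℝ) (a c d b : ℝ) : ℝ :=
  crB (g a) (g c) (g d) (g b) / crB a c d b

/-- Cross-ratio distortion `A(g,T,J) = A(g(T),g(J))/A(T,J)` for `g` monotone on `T`. -/
noncomputable def crAg (g : ℝ → ℝ) (a c d b : ℝ) : ℝ :=
  crA (g a) (g c) (g d) (g b) / crA a c d b

/-- The cross-ratio `B(T,J)` of two bounded intervals described as sets. -/
noncomputable def setB (T J : Set ℝ) : ℝ := crB (sInf T) (sInf J) (sSup J) (sSup T)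

/-- `T` is a `δ`-scaled neighbourhood of `J`: both components of `T∖J` have length
greater than `δ|J|`. -/
def ScaledNbhd (T J : Set ℝ) (δ : ℝ) : Prop :=
  J ⊆ T ∧ δ * len J < sInf J - sInf T ∧ δ * len J < sSup T - sSup J

/-- `g` restricted to `S` is a diffeomorphism (onto its image). -/
def DiffeoOn (g : ℝ → ℝ) (S : Set ℝ) : Prop :=
  ContinuousOn g S ∧ (StrictMonoOn g S ∨ StrictAntiOn g S) ∧ ∀ x ∈ S, deriv g x ≠ 0

/-- A `C²` unimodal map of `[0,1]` (with maximum at the critical point `c`),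
with non-flat critical point: the class `NF²`. -/
structure UnimodalNF2 (f : ℝ → ℝ) (c : ℝ) : Prop where
  mapsTo : Set.MapsTo f (Set.Icc 0 1) (Set.Icc 0 1)
  bdry : f '' {0, 1} ⊆ ({0, 1} : Set ℝ)
  c_mem : c ∈ Set.Ioo (0 : ℝ) 1
  smooth : ContDiffOn ℝ 2 f (Set.Icc 0 1)
  inc : StrictMonoOn f (Set.Icc 0 c)
  dec : StrictAntiOn f (Set.Icc c 1)
  nonflat : ∃ (U : Set ℝ) (φ : ℝ → ℝ) (α : ℝ), IsOpen U ∧ c ∈ U ∧ U ⊆ Set.Icc 0 1 ∧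
    1 < α ∧ φ c = 0 ∧ ContDiffOn ℝ 2 φ U ∧ (∀ x ∈ U, deriv φ x ≠ 0) ∧
    ((∀ x ∈ U, f x = |φ x| ^ α + f c) ∨ (∀ x ∈ U, f x = -|φ x| ^ α + f c))

/-- The point `c` is recurrent under `f`. -/
def RecurrentPt (f : ℝ → ℝ) (c : ℝ) : Prop := ∀ U ∈ nhds c, ∃ n, 0 < n ∧ f^[n] c ∈ U

/-- An open interval `V` is nice for `f`: forward iterates of its boundary never enter `V`. -/
def IsNiceInterval (f : ℝ → ℝ) (V : Set ℝ) : Prop :=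
  IsOpenInterval V ∧ ∀ n, 1 ≤ n → ∀ x ∈ frontier V, f^[n] x ∉ V

/-- `D` is a domain of the first entry map to `I`, with entry time `k`:  `D` is a maximal
interval on which `f^[k]` maps into `I` and no earlier iterate enters `I`. -/
def IsEntryDom (f : ℝ → ℝ) (I D : Set ℝ) (k : ℕ) : Prop :=
  0 < k ∧ IsOpenInterval D ∧ (∀ x ∈ D, ∀ j, 0 < j → j < k → f^[j] x ∉ I) ∧
  f^[k] '' D ⊆ I ∧
  ∀ D' : Set ℝ, IsOpenInterval D' → D ⊆ D' →
    (∀ x ∈ D', ∀ j, 0 < j → j < k → f^[j] x ∉ I) → f^[k] '' D' ⊆ I → D' = D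

/-- `D` is a domain of the first return map to `I`, with return time `k`. -/
def IsReturnDom (f : ℝ → ℝ) (I D : Set ℝ) (k : ℕ) : Prop :=
  D ⊆ I ∧ IsEntryDom f I D k

/-- The principal nest `I 0 ⊃ I 1 ⊃ ⋯` of nice intervals around the critical point `c`:
`I (i+1)` is the central domain of the first return map `F_i` to `I i`, and `s i` is the
return time of the central domain, so that `F_i` restricted to `I (i+1)` is `f^[s i]`. -/
structure PrincipalNest (f : ℝ → ℝ) (c : ℝ) where
  I : ℕ → Set ℝ
  s : ℕ → ℕ
  nice : ∀ i, IsNiceInterval f (I i)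
  cmem : ∀ i, c ∈ I i
  ret : ∀ i, IsReturnDom f (I i) (I (i + 1)) (s i)

/-- `F_i` is a central return: `F_i(c) ∈ I (i+1)`. -/
def PrincipalNest.Central {f : ℝ → ℝ} {c : ℝ} (N : PrincipalNest f c) (i : ℕ) : Prop :=
  f^[N.s i] c ∈ N.I (i + 1)

/-- `F_i` is high: `F_i(c)` lies to the right of `c`. -/
def PrincipalNest.High {f : ℝ → ℝ} {c : ℝ} (N : PrincipalNest f c) (i : ℕ) : Prop :=
  c < f^[N.s i] c

/-- `F_i` is low: `F_i(c)` lies to the left of `c`. -/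
def PrincipalNest.Low {f : ℝ → ℝ} {c : ℝ} (N : PrincipalNest f c) (i : ℕ) : Prop :=
  f^[N.s i] c < c

/-- `σ_i`: the supremum over return domains `V` of `I` of `Σ_{k=1}^{n(V)} |f^k(V)|`. -/
noncomputable def sigmaRet (f : ℝ → ℝ) (I : Set ℝ) : ℝ :=
  sSup {r : ℝ | ∃ (V : Set ℝ) (k : ℕ), IsReturnDom f I V k ∧
    r = ∑ j ∈ Finset.Icc 1 k, len (f^[j] '' V)}

/-- The times `n_i`: `nt 0 = n`, and for `i > 0`, `nt i` is the last time `j ≤ n` with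
`f^j(T) ⊆ I i` (and `nt i = nt (i-1)` if no iterate of `T` is contained in `I i`). -/
def EscapeTimes {f : ℝ → ℝ} {c : ℝ} (N : PrincipalNest f c) (T : Set ℝ) (n : ℕ)
    (nt : ℕ → ℕ) : Prop :=
  nt 0 = n ∧ ∀ i, 0 < i →
    ((f^[nt i] '' T ⊆ N.I i ∧ ∀ k, nt i < k → k ≤ n → ¬ f^[k] '' T ⊆ N.I i) ∨
     (nt i = nt (i - 1) ∧ ∀ j ≤ n, ¬ f^[j] '' T ⊆ N.I i))

/-- The exceptional case setup: `F_{i-2}` central, `F_{i-1}` high non-central, and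
`DL = I_i^L`, `DR = I_i^R` are the return domains to the left and right of the central
domain on which the first return map to `I i` coincides with the first return map to
`I (i-1)` (no earlier iterate enters `I (i-1)`), with return times `kL`, `kR`. -/
def ExceptionalSetup {f : ℝ → ℝ} {c : ℝ} (N : PrincipalNest f c) (i : ℕ)
    (DL DR : Set ℝ) (kL kR : ℕ) : Prop :=
  2 ≤ i ∧ N.Central (i - 2) ∧ N.High (i - 1) ∧ ¬ N.Central (i - 1) ∧
  IsReturnDom f (N.I i) DL kL ∧ IsReturnDom f (N.I i) DR kR ∧
  sSup DL ≤ sInf (N.I (i + 1)) ∧ sSup (N.I (i + 1)) ≤ sInf DR ∧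
  (∀ x ∈ DL, ∀ j, 0 < j → j < kL → f^[j] x ∉ N.I (i - 1)) ∧
  (∀ x ∈ DR, ∀ j, 0 < j → j < kR → f^[j] x ∉ N.I (i - 1))

/-- `S 0, S 1, …, S m` is an orbit of intervals under the first return map, each contained
in `I_i^L ∪ I_i^R` (i.e. in `DL` or `DR`), and `S (k+1)` the image of `S k`. -/
def LRChain (f : ℝ → ℝ) (DL DR : Set ℝ) (kL kR : ℕ) (S : ℕ → Set ℝ) (m : ℕ) : Prop :=
  ∀ k ≤ m, (S k ⊆ DL ∧ S (k + 1) = f^[kL] '' S k) ∨ (S k ⊆ DR ∧ S (k + 1) = f^[kR] '' S k)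

open Real

lemma arctan_diff_le' {a b : ℝ} (h0 : 0 ≤ a) (hab : a ≤ b) :
    arctan b - arctan a ≤ (b - a) / (1 + a^2) := by
  rcases eq_or_lt_of_le hab with rfl | h
  · simp
  obtain ⟨c, hc, hceq⟩ := exists_hasDerivAt_eq_slope arctan (fun x => 1/(1+x^2)) h
      Real.continuous_arctan.continuousOn (fun x _ => Real.hasDerivAt_arctan x)
  have hba : (0:ℝ) < b - a := by linarith
  have h1 : arctan b - arctan a = (b - a) / (1 + c^2) := by
    have hc2 : (0:ℝ) < 1 + c^2 := by positivity
    field_simp at hceq ⊢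
    linarith [hceq]
  obtain ⟨hac, hcb⟩ := hc
  rw [h1]
  gcongr <;> nlinarith

lemma arctan_diff_ge' {a b : ℝ} (h0 : 0 ≤ a) (hab : a ≤ b) :
    (b - a) / (1 + b^2) ≤ arctan b - arctan a := by
  rcases eq_or_lt_of_le hab with rfl | h
  · simp
  obtain ⟨c, hc, hceq⟩ := exists_hasDerivAt_eq_slope arctan (fun x => 1/(1+x^2)) h
      Real.continuous_arctan.continuousOn (fun x _ => Real.hasDerivAt_arctan x)
  have hba : (0:ℝ) < b - a := by linarith
  have h1 : arctan b - arctan a = (b - a) / (1 + c^2) := by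
    have hc2 : (0:ℝ) < 1 + c^2 := by positivity
    field_simp at hceq ⊢
    linarith [hceq]
  obtain ⟨hac, hcb⟩ := hc
  rw [h1]
  gcongr <;> nlinarith

lemma step_upper' {A B ε u v t : ℝ} (hA : 0 < A) (hAB : A ≤ B) (hε : 0 < ε)
    (htpos : 0 < t) (ht2 : t^2 * ε = A) (hu : 0 ≤ u)
    (hlo : ε + A * u^2 ≤ v - u) (hhi : v - u ≤ ε + B * u^2) :
    A * (arctan (t * v) - arctan (t * u)) ≤ B * (t * ε) := by
  have huv : u ≤ v := by nlinarith
  have h1 : arctan (t*v) - arctan (t*u) ≤ (t*v - t*u)/(1 + (t*u)^2) :=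
    arctan_diff_le' (by positivity) (by nlinarith)
  have h2 : A * (arctan (t*v) - arctan (t*u)) ≤ A * ((t*v - t*u)/(1 + (t*u)^2)) :=
    mul_le_mul_of_nonneg_left h1 hA.le
  refine h2.trans ?_
  rw [mul_div_assoc', div_le_iff₀ (by positivity)]
  have hexp : B*(t*ε)*(1+(t*u)^2) = B*(t*ε) + B*A*(t*u^2) := by
    have h3 : B*(t*ε)*((t*u)^2) = B*(t^2*ε)*(t*u^2) := by ring
    rw [mul_add, mul_one, h3, ht2]
  rw [hexp]
  nlinarith [mul_le_mul_of_nonneg_left hhi (mul_nonneg hA.le htpos.le),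
    mul_pos htpos hε]

lemma step_lower' {A B ε u v t : ℝ} (hA : 0 < A) (hAB : A ≤ B) (hε : 0 < ε)
    (htpos : 0 < t) (ht2 : t^2 * ε = A) (hu : 0 ≤ u) (hu1 : u ≤ 1) (hεA : A * ε ≤ 1)
    (hlo : ε + A * u^2 ≤ v - u) (hhi : v - u ≤ ε + B * u^2) :
    (t * ε) / (3 + 2*(1+B)^2) ≤ arctan (t * v) - arctan (t * u) := by
  have hB : 0 < B := lt_of_lt_of_le hA hAB
  have huv : u ≤ v := by nlinarith
  have hv : 0 ≤ v := by nlinarith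
  refine le_trans ?_ (arctan_diff_ge' (by positivity) (by nlinarith))
  rw [div_le_div_iff₀ (by positivity) (by positivity)]
  have key : ε + A * v^2 ≤ (3 + 2*(1+B)^2) * (ε + A * u^2) := by
    have hvu : v ≤ u + ε + B*u^2 := by linarith
    have h4 : A * v^2 ≤ A * (u + ε + B*u^2)^2 :=
      mul_le_mul_of_nonneg_left (pow_le_pow_left₀ hv hvu 2) hA.le
    have h5 : A * (u + B*u^2)^2 ≤ A * ((1+B)*u)^2 := by
      have huu : u + B*u^2 ≤ (1+B)*u := by
        nlinarith [mul_nonneg hB.le (mul_nonneg hu (sub_nonneg.mpr hu1))]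
      have := pow_le_pow_left₀ (by positivity : (0:ℝ) ≤ u + B*u^2) huu 2
      nlinarith
    nlinarith [sq_nonneg (u + B*u^2 - ε), mul_nonneg (mul_nonneg hA.le hε.le) hε.le,
      sq_nonneg u, mul_pos hA hε]
  have lhs_eq : t*ε*(1+(t*v)^2) = t*(ε + A*v^2) := by
    have h6 : t*ε*((t*v)^2) = (t^2*ε)*(t*v^2) := by ring
    rw [mul_add, mul_one, h6, ht2]; ring
  rw [lhs_eq]
  nlinarith [mul_le_mul_of_nonneg_left
    (key.trans (by nlinarith : (3 + 2*(1+B)^2) * (ε + A * u^2) ≤ (3 + 2*(1+B)^2) * (v - u)))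
    htpos.le]

/-- **Claim (counting estimate in the proof of the Yoccoz Lemma).**
Let `0 < A ≤ B` and `δ > 0`. There are `c, C, ε₀ > 0`, depending only on `A`, `B`, `δ`,
such that for every `0 < ε < ε₀` and every finite increasing sequence
`x 0 < x 1 < ⋯ < x N` in `[0,1]` with
`ε + A(x j − x 0)² ≤ x (j+1) − x j ≤ ε + B(x j − x 0)²` for all `0 ≤ j < N` and
`x N − x (N−1) ≥ δ`, one has `c/√ε ≤ N ≤ C/√ε`. -/
theorem yoccoz_counting_estimate
    (A B δ : ℝ) (hA : 0 < A) (hAB : A ≤ B) (hδ : 0 < δ) :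
    ∃ c C ε0 : ℝ, 0 < c ∧ 0 < C ∧ 0 < ε0 ∧
      ∀ ε : ℝ, 0 < ε → ε < ε0 →
      ∀ (N : ℕ) (x : ℕ → ℝ), 1 ≤ N →
        (∀ j ≤ N, x j ∈ Set.Icc (0 : ℝ) 1) →
        (∀ j < N, x j < x (j + 1)) →
        (∀ j < N, ε + A * (x j - x 0) ^ 2 ≤ x (j + 1) - x j ∧
                  x (j + 1) - x j ≤ ε + B * (x j - x 0) ^ 2) →
        δ ≤ x N - x (N - 1) →
        c / Real.sqrt ε ≤ (N : ℝ) ∧ (N : ℝ) ≤ C / Real.sqrt ε := by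
  
  have hB : 0 < B := lt_of_lt_of_le hA hAB
  have hsA : 0 < Real.sqrt A := Real.sqrt_pos.mpr hA
  refine ⟨Real.pi * Real.sqrt A / (4*B), Real.pi * (3+2*(1+B)^2) / (2*Real.sqrt A),
    min (A*δ^2) (1/A), by positivity, by positivity, by positivity, ?_⟩
  intro ε hε hε0 N x hN hx01 hmono hstep hlast
  have hsε : 0 < Real.sqrt ε := Real.sqrt_pos.mpr hε
  have hεδ : ε < A*δ^2 := lt_of_lt_of_le hε0 (min_le_left _ _)
  have hεA2 : A*ε ≤ 1 := by
    have h := lt_of_lt_of_le hε0 (min_le_right _ _)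
    rw [lt_div_iff₀ hA] at h
    nlinarith
  set t := Real.sqrt A / Real.sqrt ε with ht
  have htpos : 0 < t := by positivity
  have ht2 : t^2 * ε = A := by
    rw [ht, div_pow, Real.sq_sqrt hA.le, Real.sq_sqrt hε.le, div_mul_cancel₀ _ hε.ne']
  have hte : t * ε = Real.sqrt A * Real.sqrt ε := by
    rw [ht, div_mul_eq_mul_div, mul_div_assoc, Real.div_sqrt]
  -- monotonicity from x 0
  have hmono' : ∀ j, j ≤ N → x 0 ≤ x j := by
    intro j
    induction j with
    | zero => intro _; exact le_refl _
    | succ k ih =>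
        intro hk
        have hkN : k < N := Nat.lt_of_succ_le hk
        exact (ih hkN.le).trans (hmono k hkN).le
  have hy0 : ∀ j, j ≤ N → 0 ≤ x j - x 0 := fun j hj => sub_nonneg.mpr (hmono' j hj)
  have hy1 : ∀ j, j ≤ N → x j - x 0 ≤ 1 := by
    intro j hj
    have h1 := (hx01 j hj).2
    have h2 := (hx01 0 (Nat.zero_le _)).1
    linarith
  -- telescoping
  have tele : ∑ j ∈ Finset.range N,
      (arctan (t*(x (j+1) - x 0)) - arctan (t*(x j - x 0)))
      = arctan (t*(x N - x 0)) - arctan (t*(x 0 - x 0)) :=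
    Finset.sum_range_sub (fun j => arctan (t*(x j - x 0))) N
  have h00 : arctan (t*(x 0 - x 0)) = 0 := by simp
  -- upper bound on N
  have hub : (N : ℝ) ≤ Real.pi * (3+2*(1+B)^2) / (2*Real.sqrt A) / Real.sqrt ε := by
    have hsum_lo : (N:ℝ) * ((t*ε)/(3+2*(1+B)^2)) ≤ arctan (t*(x N - x 0)) := by
      calc (N:ℝ) * ((t*ε)/(3+2*(1+B)^2))
          = ∑ _j ∈ Finset.range N, ((t*ε)/(3+2*(1+B)^2)) := by
            rw [Finset.sum_const, Finset.card_range, nsmul_eq_mul]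
        _ ≤ ∑ j ∈ Finset.range N,
              (arctan (t*(x (j+1) - x 0)) - arctan (t*(x j - x 0))) := by
            apply Finset.sum_le_sum
            intro j hj
            have hjN : j < N := Finset.mem_range.mp hj
            obtain ⟨h1, h2⟩ := hstep j hjN
            exact step_lower' hA hAB hε htpos ht2 (hy0 j hjN.le) (hy1 j hjN.le) hεA2
              (by linarith) (by linarith)
        _ = arctan (t*(x N - x 0)) - arctan (t*(x 0 - x 0)) := tele
        _ ≤ arctan (t*(x N - x 0)) := by rw [h00]; simp
    have hpi2 : arctan (t*(x N - x 0)) ≤ Real.pi/2 := (Real.arctan_lt_pi_div_two _).le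
    have hK : (0:ℝ) < 3+2*(1+B)^2 := by positivity
    rw [div_div, le_div_iff₀ (by positivity)]
    have h7 : (N:ℝ) * (t*ε) ≤ Real.pi/2 * (3+2*(1+B)^2) := by
      have := mul_le_mul_of_nonneg_right (hsum_lo.trans hpi2) hK.le
      calc (N:ℝ) * (t*ε) = (N:ℝ) * ((t*ε)/(3+2*(1+B)^2)) * (3+2*(1+B)^2) := by
            field_simp
        _ ≤ Real.pi/2 * (3+2*(1+B)^2) := this
    rw [hte] at h7
    nlinarith
  -- lower bound on N
  have hlb : Real.pi * Real.sqrt A / (4*B) / Real.sqrt ε ≤ (N : ℝ) := by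
    have hδN : δ ≤ x N - x 0 := by
      have h1 := hmono' (N-1) (Nat.sub_le _ _)
      linarith
    have h8 : Real.pi/4 ≤ arctan (t*(x N - x 0)) := by
      rw [← Real.arctan_one]
      apply Real.arctan_strictMono.monotone
      have hsεδ : Real.sqrt ε < Real.sqrt A * δ := by
        rw [show Real.sqrt A * δ = Real.sqrt (A*δ^2) by
          rw [Real.sqrt_mul hA.le, Real.sqrt_sq hδ.le]]
        exact Real.sqrt_lt_sqrt hε.le hεδ
      have h9 : 1 ≤ t * δ := by
        rw [ht, div_mul_eq_mul_div, le_div_iff₀ hsε]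
        linarith
      have h10 : t * δ ≤ t * (x N - x 0) := mul_le_mul_of_nonneg_left hδN htpos.le
      linarith
    have hsum_hi : A * arctan (t*(x N - x 0)) ≤ (N:ℝ) * (B * (t*ε)) := by
      have hAsum : A * arctan (t*(x N - x 0)) =
          ∑ j ∈ Finset.range N,
            A * (arctan (t*(x (j+1) - x 0)) - arctan (t*(x j - x 0))) := by
        rw [← Finset.mul_sum, tele, h00, sub_zero]
      rw [hAsum]
      calc ∑ j ∈ Finset.range N,
            A * (arctan (t*(x (j+1) - x 0)) - arctan (t*(x j - x 0)))
          ≤ ∑ _j ∈ Finset.range N, B * (t*ε) := by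
            apply Finset.sum_le_sum
            intro j hj
            have hjN : j < N := Finset.mem_range.mp hj
            obtain ⟨h1, h2⟩ := hstep j hjN
            exact step_upper' hA hAB hε htpos ht2 (hy0 j hjN.le)
              (by linarith) (by linarith)
        _ = (N:ℝ) * (B * (t*ε)) := by
            rw [Finset.sum_const, Finset.card_range, nsmul_eq_mul]
    rw [hte] at hsum_hi
    have h11 : A * (Real.pi/4) ≤ (N:ℝ) * (B * (Real.sqrt A * Real.sqrt ε)) :=
      (mul_le_mul_of_nonneg_left h8 hA.le).trans hsum_hi
    rw [div_div, div_le_iff₀ (by positivity)]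
    have hsA2 : Real.sqrt A * Real.sqrt A = A := Real.mul_self_sqrt hA.le
    have h12 : Real.pi * Real.sqrt A * Real.sqrt A
        ≤ (N:ℝ) * (4*B*Real.sqrt ε) * Real.sqrt A := by
      nlinarith [h11, hsA2, Real.pi_pos]
    exact le_of_mul_le_mul_right h12 hsA
  exact ⟨hlb, hub⟩
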